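/- arXiv:2304.08450 — 2 statements merged into one kernel-verified Lean document; each statement's English description precedes it below -/
import Mathlib

section
/- Let H be a complex Hilbert space with dim H ≥ 2. No H-klass of valuations makes more than one of the connectives ∧, ∨, ¬ truth-functional; in particular, there is no H-klass making all three connectives truth-functional. -/
/-- Sentences generated from a countably infinite set of atoms by `∧`, `∨`, `¬`. -/
inductive Sentence : Type where
  | atom : ℕ → Sentence
  | conj : Sentence → Sentence → Sentence
  | disj : Sentence → Sentence → Sentence
  | neg  : Sentence → Sentence

/-- A (bivalent) valuation: `true` = t, `false` = f. -/
abbrev SentVal : Type := Sentence → Bool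

/-- An interpretation: a homomorphism of the language into the algebra of
closed subspaces of `H`, with `∧` as intersection, `∨` as closed linear span
and `¬` as orthogonal complement. -/
structure Interp (H : Type*) [NormedAddCommGroup H] [InnerProductSpace ℂ H]
    [CompleteSpace H] : Type _ where
  toFun : Sentence → Submodule ℂ H
  closed : ∀ a, IsClosed (toFun a : Set H)
  map_conj : ∀ a b, toFun (Sentence.conj a b) = toFun a ⊓ toFun b
  map_disj : ∀ a b, toFun (Sentence.disj a b) = (toFun a ⊔ toFun b).topologicalClosure
  map_neg : ∀ a, toFun (Sentence.neg a) = (toFun a)ᗮ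

/-- `CstarH H`: the class of valuations `v^{(i)}_P`, for interpretations `i` and
1-dimensional subspaces `P`, where `v^{(i)}_P a = t` iff `P ⊆ i a`. -/
def CstarH (H : Type*) [NormedAddCommGroup H] [InnerProductSpace ℂ H] [CompleteSpace H] :
    Set SentVal :=
  { v | ∃ (i : Interp H) (P : Submodule ℂ H), Module.finrank ℂ P = 1 ∧
      ∀ a, (v a = true ↔ P ≤ i.toFun a) }

/-- Quantum-logical consequence `Γ ⊨_H a`. -/
def QLconseq (H : Type*) [NormedAddCommGroup H] [InnerProductSpace ℂ H] [CompleteSpace H]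
    (Γ : Set Sentence) (a : Sentence) : Prop :=
  ∀ v ∈ CstarH H, (∀ γ ∈ Γ, v γ = true) → v a = true

/-- A class of valuations makes a binary connective truth-functional. -/
def MakesBinTF (C : Set SentVal) (op : Sentence → Sentence → Sentence) : Prop :=
  ∃ f : Bool → Bool → Bool, ∀ v ∈ C, ∀ a b, v (op a b) = f (v a) (v b)

/-- A class of valuations makes negation truth-functional. -/
def MakesNegTF (C : Set SentVal) : Prop :=
  ∃ f : Bool → Bool, ∀ v ∈ C, ∀ a, v (Sentence.neg a) = f (v a)

/-- The conjunction of the members of a nonempty finite list of sentences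
(the value on `[]` is an irrelevant dummy). -/
def conjList : List Sentence → Sentence
  | [] => Sentence.atom 0
  | [a] => a
  | a :: b :: l => Sentence.conj a (conjList (b :: l))

/-- An `H`-klass: for finite nonempty premise sets, validity is explicated via
the truth of the conjunction of the premises. -/
def IsHKlass (H : Type*) [NormedAddCommGroup H] [InnerProductSpace ℂ H] [CompleteSpace H]
    (K : Set SentVal) : Prop :=
  ∀ (Γ : List Sentence), Γ ≠ [] → ∀ a : Sentence,
    (QLconseq H {γ | γ ∈ Γ} a ↔ (∀ v ∈ K, v (conjList Γ) = true → v a = true))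

section QLAux

variable {H : Type*} [NormedAddCommGroup H] [InnerProductSpace ℂ H] [CompleteSpace H]

/-- Evaluation of sentences in the subspace lattice, given values on atoms. -/
noncomputable def evalS (f : ℕ → Submodule ℂ H) : Sentence → Submodule ℂ H
  | Sentence.atom n => f n
  | Sentence.conj a b => evalS f a ⊓ evalS f b
  | Sentence.disj a b => (evalS f a ⊔ evalS f b).topologicalClosure
  | Sentence.neg a => (evalS f a)ᗮ

lemma evalS_closed (f : ℕ → Submodule ℂ H) (hf : ∀ n, IsClosed ((f n : Set H))) :
    ∀ a, IsClosed ((evalS f a : Set H))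
  | Sentence.atom n => hf n
  | Sentence.conj a b => by
      have h := (evalS_closed f hf a).inter (evalS_closed f hf b)
      rw [← Submodule.coe_inf] at h
      exact h
  | Sentence.disj a b => Submodule.isClosed_topologicalClosure _
  | Sentence.neg a => Submodule.isClosed_orthogonal _

/-- The interpretation generated by an assignment of closed subspaces to atoms. -/
noncomputable def mkInterp (f : ℕ → Submodule ℂ H) (hf : ∀ n, IsClosed ((f n : Set H))) : Interp H :=
  ⟨evalS f, evalS_closed f hf, fun _ _ => rfl, fun _ _ => rfl, fun _ => rfl⟩

/-- The valuation determined by an atom-assignment and a subspace `P`. -/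
noncomputable def pointVal (f : ℕ → Submodule ℂ H) (P : Submodule ℂ H) : SentVal :=
  fun s => @decide (P ≤ evalS f s) (Classical.propDecidable _)

lemma pointVal_eq_true_iff {f : ℕ → Submodule ℂ H} {P : Submodule ℂ H} {s : Sentence} :
    pointVal f P s = true ↔ P ≤ evalS f s := by
  simp [pointVal]

lemma pointVal_mem (f : ℕ → Submodule ℂ H) (hf : ∀ n, IsClosed ((f n : Set H)))
    (P : Submodule ℂ H) (hP : Module.finrank ℂ P = 1) : pointVal f P ∈ CstarH H :=
  ⟨mkInterp f hf, P, hP, fun _ => pointVal_eq_true_iff⟩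

lemma ql_of {Γ : Set Sentence} {a : Sentence}
    (h : ∀ (i : Interp H) (P : Submodule ℂ H), Module.finrank ℂ P = 1 →
      (∀ γ ∈ Γ, P ≤ i.toFun γ) → P ≤ i.toFun a) : QLconseq H Γ a := by
  rintro v ⟨i, P, h1, hv⟩ hprem
  exact (hv a).mpr (h i P h1 fun γ hγ => (hv γ).mp (hprem γ hγ))

lemma V_mem {Γ : List Sentence} {a : Sentence} (ha : a ∈ Γ) :
    QLconseq H {γ | γ ∈ Γ} a := fun _ _ hp => hp a ha

lemma V_conj_self (a : Sentence) : QLconseq H {γ | γ ∈ [a]} (Sentence.conj a a) :=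
  ql_of fun i P _ hp => by
    rw [i.map_conj]
    exact le_inf (hp a (by simp)) (hp a (by simp))

lemma V_disj_left (a b : Sentence) : QLconseq H {γ | γ ∈ [a]} (Sentence.disj a b) :=
  ql_of fun i P _ hp => by
    rw [i.map_disj]
    exact (hp a (by simp)).trans (le_sup_left.trans (Submodule.le_topologicalClosure _))

lemma V_disj_right (a b : Sentence) : QLconseq H {γ | γ ∈ [a]} (Sentence.disj b a) :=
  ql_of fun i P _ hp => by
    rw [i.map_disj]
    exact (hp a (by simp)).trans (le_sup_right.trans (Submodule.le_topologicalClosure _))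

lemma V_disj_self_elim (a : Sentence) : QLconseq H {γ | γ ∈ [Sentence.disj a a]} a :=
  ql_of fun i P _ hp => by
    have h := hp (Sentence.disj a a) (by simp)
    rwa [i.map_disj, sup_idem, (i.closed a).submodule_topologicalClosure_eq] at h

lemma V_contradiction (a c : Sentence) :
    QLconseq H {γ | γ ∈ [a, Sentence.neg a]} c :=
  ql_of fun i P h1 hp => by
    exfalso
    have hn := hp (Sentence.neg a) (by simp)
    rw [i.map_neg] at hn
    have h2 : P ≤ i.toFun a ⊓ (i.toFun a)ᗮ := le_inf (hp a (by simp)) hn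
    rw [Submodule.inf_orthogonal_eq_bot, le_bot_iff] at h2
    rw [h2, finrank_bot] at h1
    exact one_ne_zero h1.symm

lemma V_dne (a : Sentence) : QLconseq H {γ | γ ∈ [Sentence.neg (Sentence.neg a)]} a :=
  ql_of fun i P _ hp => by
    have h := hp (Sentence.neg (Sentence.neg a)) (by simp)
    rw [i.map_neg, i.map_neg] at h
    haveI : CompleteSpace (i.toFun a) := (i.closed a).completeSpace_coe
    haveI := Submodule.HasOrthogonalProjection.ofCompleteSpace (K := i.toFun a)
    rwa [Submodule.orthogonal_orthogonal] at h

lemma V_dni (a : Sentence) : QLconseq H {γ | γ ∈ [a]} (Sentence.neg (Sentence.neg a)) :=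
  ql_of fun i P _ hp => by
    rw [i.map_neg, i.map_neg]
    exact (hp a (by simp)).trans (Submodule.le_orthogonal_orthogonal _)

lemma V_lem (a b : Sentence) :
    QLconseq H {γ | γ ∈ [a]} (Sentence.disj b (Sentence.neg b)) :=
  ql_of fun i P _ _ => by
    rw [i.map_disj, i.map_neg]
    have h : (i.toFun b ⊔ (i.toFun b)ᗮ).topologicalClosure = ⊤ := by
      rw [Submodule.topologicalClosure_eq_top_iff]
      refine le_bot_iff.mp ?_
      have h1 : (i.toFun b ⊔ (i.toFun b)ᗮ)ᗮ ≤ (i.toFun b)ᗮ ⊓ (i.toFun b)ᗮᗮ :=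
        le_inf (Submodule.orthogonal_le le_sup_left) (Submodule.orthogonal_le le_sup_right)
      rwa [Submodule.inf_orthogonal_eq_bot] at h1
    rw [h]
    exact le_top

lemma orth_sup (S T : Submodule ℂ H) : (S ⊔ T)ᗮ = Sᗮ ⊓ Tᗮ := by
  refine le_antisymm
    (le_inf (Submodule.orthogonal_le le_sup_left) (Submodule.orthogonal_le le_sup_right)) ?_
  intro z hz
  rcases Submodule.mem_inf.mp hz with ⟨hz1, hz2⟩
  rw [Submodule.mem_orthogonal]
  intro u hu
  obtain ⟨s, hs, t, ht, rfl⟩ := Submodule.mem_sup.mp hu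
  rw [inner_add_left, (Submodule.mem_orthogonal S z).mp hz1 s hs,
    (Submodule.mem_orthogonal T z).mp hz2 t ht, add_zero]

lemma orth_closure (S : Submodule ℂ H) : S.topologicalClosureᗮ = Sᗮ := by
  rw [← Submodule.orthogonal_orthogonal_eq_closure]
  haveI : CompleteSpace (Sᗮ : Submodule ℂ H) := (Submodule.isClosed_orthogonal S).completeSpace_coe
  haveI := Submodule.HasOrthogonalProjection.ofCompleteSpace (K := Sᗮ)
  exact Submodule.orthogonal_orthogonal Sᗮ

/-- Atom assignment used in the counterexamples. -/
def g3 (A B L : Submodule ℂ H) : ℕ → Submodule ℂ H :=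
  fun n => if n = 0 then A else if n = 1 then B else L

lemma g3_closed {A B L : Submodule ℂ H} (hA : IsClosed (A : Set H))
    (hB : IsClosed (B : Set H)) (hL : IsClosed (L : Set H)) :
    ∀ n, IsClosed ((g3 A B L n : Set H)) := by
  intro n
  dsimp [g3]
  split_ifs <;> assumption

lemma invalid1 {x y : H} (hx : x ≠ 0) (hxny : x ∉ (ℂ ∙ y)) :
    ¬ QLconseq H {γ | γ ∈ [Sentence.atom 1]} (Sentence.atom 0) := by
  intro hc
  have hfc : ∀ n, IsClosed ((g3 (ℂ ∙ y) (ℂ ∙ x) (ℂ ∙ x) n : Set H)) :=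
    g3_closed (Submodule.closed_of_finiteDimensional _)
      (Submodule.closed_of_finiteDimensional _) (Submodule.closed_of_finiteDimensional _)
  have h := hc (pointVal (g3 (ℂ ∙ y) (ℂ ∙ x) (ℂ ∙ x)) (ℂ ∙ x))
    (pointVal_mem _ hfc _ (finrank_span_singleton hx)) ?_
  · rw [pointVal_eq_true_iff] at h
    simp only [evalS, g3] at h
    norm_num at h
    exact hxny h
  · intro γ hγ
    simp only [Set.mem_setOf_eq, List.mem_singleton] at hγ
    subst hγ
    rw [pointVal_eq_true_iff]
    simp only [evalS, g3]
    norm_num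

lemma invalid_cd {x y : H} (hx : x ≠ 0)
    (hAB : (ℂ ∙ x) ⊓ (ℂ ∙ y) = ⊥)
    (hBL : (ℂ ∙ x) ≤ (ℂ ∙ y) ⊔ (ℂ ∙ (x + y)))
    (hxL : x ∉ (ℂ ∙ (x + y))) :
    ¬ QLconseq H {γ | γ ∈ [Sentence.conj
        (Sentence.disj (Sentence.atom 0) (Sentence.atom 2))
        (Sentence.disj (Sentence.atom 1) (Sentence.atom 2))]}
      (Sentence.disj (Sentence.conj (Sentence.atom 0) (Sentence.atom 1)) (Sentence.atom 2)) := by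
  intro hc
  have hfc : ∀ n, IsClosed ((g3 (ℂ ∙ x) (ℂ ∙ y) (ℂ ∙ (x + y)) n : Set H)) :=
    g3_closed (Submodule.closed_of_finiteDimensional _)
      (Submodule.closed_of_finiteDimensional _) (Submodule.closed_of_finiteDimensional _)
  have h := hc (pointVal (g3 (ℂ ∙ x) (ℂ ∙ y) (ℂ ∙ (x + y))) (ℂ ∙ x))
    (pointVal_mem _ hfc _ (finrank_span_singleton hx)) ?_
  · rw [pointVal_eq_true_iff] at h
    simp only [evalS, g3] at h
    norm_num at h
    rw [hAB, bot_sup_eq] at h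
    exact hxL h
  · intro γ hγ
    simp only [Set.mem_setOf_eq, List.mem_singleton] at hγ
    subst hγ
    rw [pointVal_eq_true_iff]
    simp only [evalS, g3]
    norm_num
    exact hBL (Submodule.mem_span_singleton_self x)

lemma invalid_cn {x y : H} (hx : x ≠ 0)
    (hAB : (ℂ ∙ x) ⊓ (ℂ ∙ y) = ⊥)
    (hBL : (ℂ ∙ x) ≤ (ℂ ∙ y) ⊔ (ℂ ∙ (x + y)))
    (hxL : x ∉ (ℂ ∙ (x + y))) :
    ¬ QLconseq H {γ | γ ∈ [Sentence.conj
        (Sentence.neg (Sentence.conj (Sentence.neg (Sentence.atom 0))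
          (Sentence.neg (Sentence.atom 2))))
        (Sentence.neg (Sentence.conj (Sentence.neg (Sentence.atom 1))
          (Sentence.neg (Sentence.atom 2))))]}
      (Sentence.neg (Sentence.conj
        (Sentence.neg (Sentence.conj (Sentence.atom 0) (Sentence.atom 1)))
        (Sentence.neg (Sentence.atom 2)))) := by
  intro hc
  have hfc : ∀ n, IsClosed ((g3 (ℂ ∙ x) (ℂ ∙ y) (ℂ ∙ (x + y)) n : Set H)) :=
    g3_closed (Submodule.closed_of_finiteDimensional _)
      (Submodule.closed_of_finiteDimensional _) (Submodule.closed_of_finiteDimensional _)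
  have h := hc (pointVal (g3 (ℂ ∙ x) (ℂ ∙ y) (ℂ ∙ (x + y))) (ℂ ∙ x))
    (pointVal_mem _ hfc _ (finrank_span_singleton hx)) ?_
  · rw [pointVal_eq_true_iff] at h
    simp only [evalS, g3] at h
    norm_num at h
    rw [hAB, Submodule.bot_orthogonal_eq_top, top_inf_eq] at h
    haveI : CompleteSpace (ℂ ∙ (x + y) : Submodule ℂ H) :=
      (Submodule.closed_of_finiteDimensional _).completeSpace_coe
    rw [Submodule.orthogonal_orthogonal] at h
    exact hxL h
  · intro γ hγ
    simp only [Set.mem_setOf_eq, List.mem_singleton] at hγ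
    subst hγ
    rw [pointVal_eq_true_iff]
    simp only [evalS, g3]
    norm_num
    rw [← orth_sup, ← orth_sup, Submodule.orthogonal_orthogonal_eq_closure,
      Submodule.orthogonal_orthogonal_eq_closure]
    exact ⟨Submodule.le_topologicalClosure _
        (Submodule.mem_sup_left (Submodule.mem_span_singleton_self x)),
      Submodule.le_topologicalClosure _ (hBL (Submodule.mem_span_singleton_self x))⟩

lemma invalid_dn {x y : H} (hx : x ≠ 0)
    (hAB : (ℂ ∙ x) ⊓ (ℂ ∙ y) = ⊥)
    (hBL : (ℂ ∙ x) ≤ (ℂ ∙ y) ⊔ (ℂ ∙ (x + y)))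
    (hxL : x ∉ (ℂ ∙ (x + y))) :
    ¬ QLconseq H {γ | γ ∈ [Sentence.neg (Sentence.disj
        (Sentence.neg (Sentence.disj (Sentence.atom 0) (Sentence.atom 2)))
        (Sentence.neg (Sentence.disj (Sentence.atom 1) (Sentence.atom 2))))]}
      (Sentence.disj
        (Sentence.neg (Sentence.disj (Sentence.neg (Sentence.atom 0))
          (Sentence.neg (Sentence.atom 1))))
        (Sentence.atom 2)) := by
  intro hc
  have hfc : ∀ n, IsClosed ((g3 (ℂ ∙ x) (ℂ ∙ y) (ℂ ∙ (x + y)) n : Set H)) :=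
    g3_closed (Submodule.closed_of_finiteDimensional _)
      (Submodule.closed_of_finiteDimensional _) (Submodule.closed_of_finiteDimensional _)
  have h := hc (pointVal (g3 (ℂ ∙ x) (ℂ ∙ y) (ℂ ∙ (x + y))) (ℂ ∙ x))
    (pointVal_mem _ hfc _ (finrank_span_singleton hx)) ?_
  · rw [pointVal_eq_true_iff] at h
    simp only [evalS, g3] at h
    norm_num at h
    haveI : CompleteSpace (ℂ ∙ x : Submodule ℂ H) :=
      (Submodule.closed_of_finiteDimensional _).completeSpace_coe
    haveI : CompleteSpace (ℂ ∙ y : Submodule ℂ H) :=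
      (Submodule.closed_of_finiteDimensional _).completeSpace_coe
    rw [orth_sup, Submodule.orthogonal_orthogonal,
      Submodule.orthogonal_orthogonal, hAB, bot_sup_eq,
      (Submodule.closed_of_finiteDimensional _).submodule_topologicalClosure_eq] at h
    exact hxL h
  · intro γ hγ
    simp only [Set.mem_setOf_eq, List.mem_singleton] at hγ
    subst hγ
    rw [pointVal_eq_true_iff]
    simp only [evalS, g3]
    norm_num
    exact ((Submodule.le_orthogonal_orthogonal _).trans (Submodule.orthogonal_le
      (sup_le (Submodule.orthogonal_le le_sup_left)
        (Submodule.orthogonal_le hBL)))) (Submodule.mem_span_singleton_self x)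

end QLAux

/-- for `dim H ≥ 2`, no `H`-klass makes more than one of the
connectives `∧`, `∨`, `¬` truth-functional; in particular no `H`-klass makes
all three truth-functional. -/
theorem stmt_14 (H : Type*) [NormedAddCommGroup H] [InnerProductSpace ℂ H]
    [CompleteSpace H] (hdim : 2 ≤ Module.rank ℂ H) :
    ∀ K : Set SentVal, IsHKlass H K →
      ¬ (MakesBinTF K Sentence.conj ∧ MakesBinTF K Sentence.disj) ∧
      ¬ (MakesBinTF K Sentence.conj ∧ MakesNegTF K) ∧
      ¬ (MakesBinTF K Sentence.disj ∧ MakesNegTF K) ∧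
      ¬ (MakesBinTF K Sentence.conj ∧ MakesBinTF K Sentence.disj ∧ MakesNegTF K) := by
  intro K hK
  haveI : Nontrivial H :=
    rank_pos_iff_nontrivial.mp (lt_of_lt_of_le (by norm_num) hdim)
  obtain ⟨x, hx0⟩ := exists_ne (0 : H)
  obtain ⟨y, hxy⟩ := exists_linearIndependent_pair_of_one_lt_rank
    (lt_of_lt_of_le (by norm_num : (1:Cardinal) < 2) hdim) hx0
  have hpair : ∀ s t : ℂ, s • x + t • y = 0 → s = 0 ∧ t = 0 :=
    LinearIndependent.pair_iff.mp hxy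
  have hxny : x ∉ (ℂ ∙ y) := by
    intro h
    obtain ⟨a, ha⟩ := Submodule.mem_span_singleton.mp h
    have h0 : (1 : ℂ) • x + (-a) • y = 0 := by rw [← ha]; module
    exact one_ne_zero (hpair 1 (-a) h0).1
  have hxL : x ∉ (ℂ ∙ (x + y)) := by
    intro h
    obtain ⟨a, ha⟩ := Submodule.mem_span_singleton.mp h
    have h0 : (a - 1) • x + a • y = 0 := by
      have he : (a - 1) • x + a • y = a • (x + y) - x := by module
      rw [he, ha, sub_self]
    rcases hpair _ _ h0 with ⟨h1, h2⟩
    rw [h2] at h1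
    norm_num at h1
  have hAB : (ℂ ∙ x) ⊓ (ℂ ∙ y) = ⊥ := by
    rw [eq_bot_iff]
    rintro z hz
    rcases Submodule.mem_inf.mp hz with ⟨hz1, hz2⟩
    obtain ⟨a, ha⟩ := Submodule.mem_span_singleton.mp hz1
    obtain ⟨b, hb⟩ := Submodule.mem_span_singleton.mp hz2
    have h0 : a • x + (-b) • y = 0 := by rw [neg_smul, ha, hb]; simp
    rw [Submodule.mem_bot, ← ha, (hpair _ _ h0).1, zero_smul]
  have hBL : (ℂ ∙ x) ≤ (ℂ ∙ y) ⊔ (ℂ ∙ (x + y)) := by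
    rw [Submodule.span_singleton_le_iff_mem]
    exact Submodule.mem_sup.mpr ⟨-y, Submodule.neg_mem _ (Submodule.mem_span_singleton_self y),
      x + y, Submodule.mem_span_singleton_self _, by abel⟩
  -- transfer from quantum consequence to the klass `K`
  have useV : ∀ (Γ : List Sentence), Γ ≠ [] → ∀ a : Sentence, QLconseq H {γ | γ ∈ Γ} a →
      ∀ v ∈ K, v (conjList Γ) = true → v a = true :=
    fun Γ h a hv => (hK Γ h a).mp hv
  have getW : ∀ X Yc : Sentence, ¬ QLconseq H {γ | γ ∈ [X]} Yc →
      ∃ v ∈ K, v X = true ∧ v Yc = false := by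
    intro X Yc hnot
    by_contra hcon
    refine hnot ((hK [X] (by simp) Yc).mpr ?_)
    intro v hv hX
    rw [show conjList [X] = X from rfl] at hX
    cases hb : v Yc with
    | true => rfl
    | false => exact absurd ⟨v, hv, hX, hb⟩ hcon
  -- a valuation in `K` taking value `t` at atom 1 and `f` at atom 0
  obtain ⟨v0, hv0K, hv0q, hv0p⟩ :=
    getW (Sentence.atom 1) (Sentence.atom 0) (invalid1 hx0 hxny)
  -- any truth-function for `∧` must be Boolean conjunction
  have fAND : ∀ f : Bool → Bool → Bool,
      (∀ v ∈ K, ∀ a b, v (Sentence.conj a b) = f (v a) (v b)) →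
      ∀ u w : Bool, f u w = (u && w) := by
    intro f hf
    have e1 : f true true = true := by
      have h := useV [Sentence.atom 1] (by simp) (Sentence.conj (Sentence.atom 1) (Sentence.atom 1))
        (V_conj_self _) v0 hv0K (by rw [show conjList [Sentence.atom 1] = Sentence.atom 1 from rfl]; exact hv0q)
      rwa [hf v0 hv0K, hv0q] at h
    have key : ∀ u w : Bool, f u w = true → (u = true ∧ w = true) → True := fun _ _ _ _ => trivial
    have e2 : f true false = false := by
      by_contra h2
      rw [Bool.not_eq_false] at h2
      have h := useV [Sentence.atom 1, Sentence.atom 0] (by simp) (Sentence.atom 0)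
        (V_mem (by simp)) v0 hv0K ?_
      · rw [hv0p] at h; cases h
      · rw [show conjList [Sentence.atom 1, Sentence.atom 0] =
            Sentence.conj (Sentence.atom 1) (Sentence.atom 0) from rfl,
          hf v0 hv0K, hv0q, hv0p, h2]
    have e3 : f false true = false := by
      by_contra h2
      rw [Bool.not_eq_false] at h2
      have h := useV [Sentence.atom 0, Sentence.atom 1] (by simp) (Sentence.atom 0)
        (V_mem (by simp)) v0 hv0K ?_
      · rw [hv0p] at h; cases h
      · rw [show conjList [Sentence.atom 0, Sentence.atom 1] =
            Sentence.conj (Sentence.atom 0) (Sentence.atom 1) from rfl,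
          hf v0 hv0K, hv0q, hv0p, h2]
    have e4 : f false false = false := by
      by_contra h2
      rw [Bool.not_eq_false] at h2
      have h := useV [Sentence.atom 0, Sentence.atom 0] (by simp) (Sentence.atom 0)
        (V_mem (by simp)) v0 hv0K ?_
      · rw [hv0p] at h; cases h
      · rw [show conjList [Sentence.atom 0, Sentence.atom 0] =
            Sentence.conj (Sentence.atom 0) (Sentence.atom 0) from rfl,
          hf v0 hv0K, hv0p, h2]
    intro u w
    cases u <;> cases w <;> simp [e1, e2, e3, e4]
  -- any truth-function for `∨` must be Boolean disjunction
  have gOR : ∀ g : Bool → Bool → Bool,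
      (∀ v ∈ K, ∀ a b, v (Sentence.disj a b) = g (v a) (v b)) →
      ∀ u w : Bool, g u w = (u || w) := by
    intro g hg
    have e1 : g true true = true := by
      have h := useV [Sentence.atom 1] (by simp) (Sentence.disj (Sentence.atom 1) (Sentence.atom 1))
        (V_disj_left _ _) v0 hv0K hv0q
      rwa [hg v0 hv0K, hv0q] at h
    have e2 : g true false = true := by
      have h := useV [Sentence.atom 1] (by simp) (Sentence.disj (Sentence.atom 1) (Sentence.atom 0))
        (V_disj_left _ _) v0 hv0K hv0q
      rwa [hg v0 hv0K, hv0q, hv0p] at h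
    have e3 : g false true = true := by
      have h := useV [Sentence.atom 1] (by simp) (Sentence.disj (Sentence.atom 0) (Sentence.atom 1))
        (V_disj_right _ _) v0 hv0K hv0q
      rwa [hg v0 hv0K, hv0q, hv0p] at h
    have e4 : g false false = false := by
      by_contra h2
      rw [Bool.not_eq_false] at h2
      have h := useV [Sentence.disj (Sentence.atom 0) (Sentence.atom 0)] (by simp)
        (Sentence.atom 0) (V_disj_self_elim _) v0 hv0K ?_
      · rw [hv0p] at h; cases h
      · rw [show conjList [Sentence.disj (Sentence.atom 0) (Sentence.atom 0)] =
            Sentence.disj (Sentence.atom 0) (Sentence.atom 0) from rfl,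
          hg v0 hv0K, hv0p, h2]
    intro u w
    cases u <;> cases w <;> simp [e1, e2, e3, e4]
  -- given a truth-functional `∧`, a truth-function for `¬` must be Boolean negation
  have nNOTc : ∀ (f : Bool → Bool → Bool),
      (∀ v ∈ K, ∀ a b, v (Sentence.conj a b) = f (v a) (v b)) →
      ∀ n : Bool → Bool, (∀ v ∈ K, ∀ a, v (Sentence.neg a) = n (v a)) →
      ∀ u : Bool, n u = !u := by
    intro f hf n hn
    have hfA := fAND f hf
    have e1 : n true = false := by
      by_contra h2
      rw [Bool.not_eq_false] at h2
      have h := useV [Sentence.atom 1, Sentence.neg (Sentence.atom 1)] (by simp)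
        (Sentence.atom 0) (V_contradiction _ _) v0 hv0K ?_
      · rw [hv0p] at h; cases h
      · rw [show conjList [Sentence.atom 1, Sentence.neg (Sentence.atom 1)] =
            Sentence.conj (Sentence.atom 1) (Sentence.neg (Sentence.atom 1)) from rfl,
          hf v0 hv0K, hn v0 hv0K, hv0q, h2, hfA]
        rfl
    have e2 : n false = true := by
      have h := useV [Sentence.atom 1] (by simp)
        (Sentence.neg (Sentence.neg (Sentence.atom 1))) (V_dni _) v0 hv0K hv0q
      rwa [hn v0 hv0K, hn v0 hv0K, hv0q, e1] at h
    intro u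
    cases u <;> simp [e1, e2]
  -- given a truth-functional `∨`, a truth-function for `¬` must be Boolean negation
  have nNOTd : ∀ (g : Bool → Bool → Bool),
      (∀ v ∈ K, ∀ a b, v (Sentence.disj a b) = g (v a) (v b)) →
      ∀ n : Bool → Bool, (∀ v ∈ K, ∀ a, v (Sentence.neg a) = n (v a)) →
      ∀ u : Bool, n u = !u := by
    intro g hg n hn
    have hgO := gOR g hg
    have e2 : n false = true := by
      have h := useV [Sentence.atom 1] (by simp)
        (Sentence.disj (Sentence.atom 0) (Sentence.neg (Sentence.atom 0)))
        (V_lem _ _) v0 hv0K hv0q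
      rw [hg v0 hv0K, hn v0 hv0K, hv0p, hgO] at h
      simpa using h
    have e1 : n true = false := by
      by_contra h2
      rw [Bool.not_eq_false] at h2
      have h := useV [Sentence.neg (Sentence.neg (Sentence.atom 0))] (by simp)
        (Sentence.atom 0) (V_dne _) v0 hv0K ?_
      · rw [hv0p] at h; cases h
      · rw [show conjList [Sentence.neg (Sentence.neg (Sentence.atom 0))] =
            Sentence.neg (Sentence.neg (Sentence.atom 0)) from rfl,
          hn v0 hv0K, hn v0 hv0K, hv0p, e2, h2]
    intro u
    cases u <;> simp [e1, e2]
  have C1 : ¬ (MakesBinTF K Sentence.conj ∧ MakesBinTF K Sentence.disj) := by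
    rintro ⟨⟨f, hf⟩, ⟨g, hg⟩⟩
    obtain ⟨w, hwK, hwX, hwY⟩ := getW _ _ (invalid_cd hx0 hAB hBL hxL)
    simp only [hf w hwK, hg w hwK, fAND f hf, gOR g hg] at hwX hwY
    revert hwX hwY
    generalize w (Sentence.atom 0) = b0
    generalize w (Sentence.atom 1) = b1
    generalize w (Sentence.atom 2) = b2
    revert b0 b1 b2
    decide
  have C2 : ¬ (MakesBinTF K Sentence.conj ∧ MakesNegTF K) := by
    rintro ⟨⟨f, hf⟩, ⟨n, hn⟩⟩
    obtain ⟨w, hwK, hwX, hwY⟩ := getW _ _ (invalid_cn hx0 hAB hBL hxL)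
    simp only [hf w hwK, hn w hwK, fAND f hf, nNOTc f hf n hn] at hwX hwY
    revert hwX hwY
    generalize w (Sentence.atom 0) = b0
    generalize w (Sentence.atom 1) = b1
    generalize w (Sentence.atom 2) = b2
    revert b0 b1 b2
    decide
  have C3 : ¬ (MakesBinTF K Sentence.disj ∧ MakesNegTF K) := by
    rintro ⟨⟨g, hg⟩, ⟨n, hn⟩⟩
    obtain ⟨w, hwK, hwX, hwY⟩ := getW _ _ (invalid_dn hx0 hAB hBL hxL)
    simp only [hg w hwK, hn w hwK, gOR g hg, nNOTd g hg n hn] at hwX hwY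
    revert hwX hwY
    generalize w (Sentence.atom 0) = b0
    generalize w (Sentence.atom 1) = b1
    generalize w (Sentence.atom 2) = b2
    revert b0 b1 b2
    decide
  exact ⟨C1, C2, C3, fun ⟨hc, hd, _⟩ => C1 ⟨hc, hd⟩⟩
end

section
/- The class C*_CL ∪ {ṽ'_CL}, where ṽ'_CL is the valuation defined by ṽ'_CL(a) = f iff ⊨_CL ¬a (i.e. a is a classical falsehood) and ṽ'_CL(a) = t otherwise, is a CL-klass: for all finite nonempty Γ ⊆ S and a ∈ S, Γ ⊨_CL a iff every v ∈ C*_CL ∪ {ṽ'_CL} with v(⋀_{γ∈Γ} γ) = t has v(a) = t. Moreover, this klass makes conjunction non-truth-functional. -/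
/-- The class `C*_CL` of all classical (truth-table) valuations. -/
def CstarCL : Set SentVal :=
  { v | (∀ a b, (v (Sentence.conj a b) = true ↔ (v a = true ∧ v b = true))) ∧
        (∀ a b, (v (Sentence.disj a b) = false ↔ (v a = false ∧ v b = false))) ∧
        (∀ a, (v (Sentence.neg a) = true ↔ v a = false)) }

/-- Classical consequence `Γ ⊨_CL a`. -/
def CLconseq (Γ : Set Sentence) (a : Sentence) : Prop :=
  ∀ v ∈ CstarCL, (∀ γ ∈ Γ, v γ = true) → v a = true

/-- `⊨_CL a`: `a` is a classical tautology. -/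
def CLvalid (a : Sentence) : Prop := ∀ v ∈ CstarCL, v a = true

/-- The non-standard valuation `ṽ'_CL`: `ṽ'_CL a = f` iff `a` is a classical
falsehood (i.e. `⊨_CL ¬a`), and `ṽ'_CL a = t` otherwise. -/
noncomputable def tildeVCL' : SentVal :=
  fun a => !(@decide (CLvalid (Sentence.neg a)) (Classical.propDecidable _))

/-- A CL-klass: for finite nonempty premise sets, validity is explicated via
the truth of the conjunction of the premises. -/
def IsCLKlass (K : Set SentVal) : Prop :=
  ∀ (Γ : List Sentence), Γ ≠ [] → ∀ a : Sentence,
    (CLconseq {γ | γ ∈ Γ} a ↔ (∀ v ∈ K, v (conjList Γ) = true → v a = true))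

def evalV (g : ℕ → Bool) : SentVal
  | Sentence.atom n => g n
  | Sentence.conj a b => evalV g a && evalV g b
  | Sentence.disj a b => evalV g a || evalV g b
  | Sentence.neg a => !(evalV g a)

lemma evalV_mem (g : ℕ → Bool) : evalV g ∈ CstarCL := by
  refine ⟨fun a b => ?_, fun a b => ?_, fun a => ?_⟩ <;>
    simp [evalV, Bool.and_eq_true, Bool.or_eq_false_iff]

lemma tildeVCL'_eq_true (a : Sentence) :
    tildeVCL' a = true ↔ ¬ CLvalid (Sentence.neg a) := by
  simp [tildeVCL']

lemma conjList_true {v : SentVal} (hv : v ∈ CstarCL) :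
    ∀ (Γ : List Sentence), Γ ≠ [] →
      (v (conjList Γ) = true ↔ ∀ γ ∈ Γ, v γ = true) := by
  intro Γ
  induction Γ with
  | nil => simp
  | cons a l ih =>
    intro _
    cases l with
    | nil => simp [conjList]
    | cons b l' =>
      rw [conjList, (hv.1 a (conjList (b :: l'))), ih (by simp)]
      simp

/-- `C*_CL ∪ {ṽ'_CL}` (with `ṽ'_CL a = f` iff `⊨_CL ¬a`) is a
CL-klass, and it makes conjunction non-truth-functional. -/
theorem stmt_16 :
    IsCLKlass (CstarCL ∪ {tildeVCL'}) ∧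
    ¬ MakesBinTF (CstarCL ∪ {tildeVCL'}) Sentence.conj := by
  constructor
  · intro Γ hΓ a
    constructor
    · intro hc v hv hvt
      rcases hv with hv | hv
      · exact hc v hv ((conjList_true hv Γ hΓ).mp hvt)
      · -- v = ṽ'
        simp only [Set.mem_singleton_iff] at hv
        subst hv
        rw [tildeVCL'_eq_true] at hvt ⊢
        intro hval
        apply hvt
        intro w hw
        rw [hw.2.2]
        by_contra h
        have hwc : w (conjList Γ) = true := by
          cases hcg : w (conjList Γ) with
          | true => rfl
          | false => exact absurd hcg h
        have hall := (conjList_true hw Γ hΓ).mp hwc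
        have := hc w hw hall
        have := hval w hw
        rw [hw.2.2] at this
        rw [this] at ‹w a = true›
        exact Bool.noConfusion ‹(false : Bool) = true›
    · intro h v hv hall
      exact h v (Or.inl hv) ((conjList_true hv Γ hΓ).mpr hall)
  · rintro ⟨f, hf⟩
    have hv' : tildeVCL' ∈ CstarCL ∪ {tildeVCL'} := Or.inr rfl
    have h1 : tildeVCL' (Sentence.atom 0) = true := by
      rw [tildeVCL'_eq_true]
      intro hval
      have := hval (evalV (fun _ => true)) (evalV_mem _)
      simp [evalV] at this
    have h2 : tildeVCL' (Sentence.atom 1) = true := by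
      rw [tildeVCL'_eq_true]
      intro hval
      have := hval (evalV (fun _ => true)) (evalV_mem _)
      simp [evalV] at this
    have h3 : tildeVCL' (Sentence.neg (Sentence.atom 0)) = true := by
      rw [tildeVCL'_eq_true]
      intro hval
      have := hval (evalV (fun _ => false)) (evalV_mem _)
      simp [evalV] at this
    have h4 : tildeVCL' (Sentence.conj (Sentence.atom 0) (Sentence.atom 1)) = true := by
      rw [tildeVCL'_eq_true]
      intro hval
      have := hval (evalV (fun _ => true)) (evalV_mem _)
      simp [evalV] at this
    have h5 : tildeVCL' (Sentence.conj (Sentence.atom 0) (Sentence.neg (Sentence.atom 0))) = false := by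
      have : CLvalid (Sentence.neg (Sentence.conj (Sentence.atom 0) (Sentence.neg (Sentence.atom 0)))) := by
        intro w hw
        rw [hw.2.2]
        by_contra h
        have hT : w (Sentence.conj (Sentence.atom 0) (Sentence.neg (Sentence.atom 0))) = true := by
          cases hcg : w (Sentence.conj (Sentence.atom 0) (Sentence.neg (Sentence.atom 0))) with
          | true => rfl
          | false => exact absurd hcg h
        have := (hw.1 _ _).mp hT
        have hn := (hw.2.2 (Sentence.atom 0)).mp this.2
        rw [this.1] at hn
        exact Bool.noConfusion hn
      simp [tildeVCL', this]
    have e1 := hf tildeVCL' hv' (Sentence.atom 0) (Sentence.atom 1)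
    have e2 := hf tildeVCL' hv' (Sentence.atom 0) (Sentence.neg (Sentence.atom 0))
    rw [h1, h2, h4] at e1
    rw [h1, h3, h5] at e2
    rw [← e1] at e2
    exact Bool.noConfusion e2
end
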